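/- arXiv:1912.00851 — 2 statements merged into one kernel-verified Lean document; each statement's English description precedes it below -/
import Mathlib

section
/- Let f : ℕ → (0,∞) be a function such that both f and n ↦ 1/f(n) are weakly super-multiplicative, and suppose f has a normal order g, where g : (0,∞) → (0,∞) is strictly positive and log-uniformly continuous. Then there exists a real constant c such that f(n) = n^c holds for all n ∈ ℕ. -/
/-- The upper density of a set of natural numbers:
`limsup_{N→∞} #{n ∈ S : n ≤ N} / N`. -/
noncomputable def upperDensity (S : Set ℕ) : ℝ :=
  Filter.limsup (fun N : ℕ => (({n | n ∈ S ∧ n ≤ N} : Set ℕ).ncard : ℝ) / N) Filter.atTop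

/-- `f` is weakly super-multiplicative: for every `n` and `ε > 0` there exist
`x₀ > 0` and `δ > 0` such that for all `x > x₀` the number of integers
`m ∈ [x, (1+ε)x]` with `f(nm) ≥ (1-ε) f(n) f(m)` is at least `δ x`. -/
def WeaklySuperMult (f : ℕ → ℝ) : Prop :=
  ∀ n : ℕ, 0 < n → ∀ ε : ℝ, 0 < ε → ∃ x₀ : ℝ, 0 < x₀ ∧ ∃ δ : ℝ, 0 < δ ∧
    ∀ x : ℝ, x₀ < x →
      δ * x ≤
        (({m : ℕ | (x ≤ (m : ℝ) ∧ (m : ℝ) ≤ (1 + ε) * x) ∧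
            (1 - ε) * f n * f m ≤ f (n * m)} : Set ℕ).ncard : ℝ)

/-- `f` has normal order `g`: for every `ε > 0` the set
`{n : |f(n) - g(n)| ≥ ε g(n)}` has upper density `0`. -/
def HasNormalOrder (f : ℕ → ℝ) (g : ℝ → ℝ) : Prop :=
  ∀ ε : ℝ, 0 < ε → upperDensity {n : ℕ | ε * g n ≤ |f n - g n|} = 0

/-- `g` is log-uniformly continuous: for every `ε > 0` there is `δ > 0` such that
`|x/y - 1| < δ` implies `|g(x)/g(y) - 1| < ε` for positive `x, y`. -/
def LogUniformlyContinuous (g : ℝ → ℝ) : Prop :=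
  ∀ ε : ℝ, 0 < ε → ∃ δ : ℝ, 0 < δ ∧ ∀ x y : ℝ, 0 < x → 0 < y →
    |x / y - 1| < δ → |g x / g y - 1| < ε

/-!
With `L = log ∘ f` and `G = log ∘ g`, weak super-multiplicativity of `f` and of `1/f`, together
with the normal order, force `G(n x) - G(x) → L(n)` as `x → ∞`: a positive proportion of the `m`
in `[x, (1+ε)x]` satisfy `L(n) + L(m) ≤ L(nm) + ε`, while all but few `m` have `L(m) ≈ G(m)` and
`L(nm) ≈ G(nm)`, and `G` barely moves across the window. Hence `L` is completely additive, and
log-uniform continuity of `g` bounds `|L(a) - L(b)|` when `a/b` is close to `1`, hence whenever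
`a/b` is bounded. Comparing `n^k` with the largest power `m^l ≤ n^k` gives
`k (L(n) log m - L(m) log n) = O(1)`, so `L(n) = c log n`.
-/

open Filter Topology

lemma finite_setOf_and_natCast_le (p : ℕ → Prop) (y : ℝ) : {m : ℕ | p m ∧ (m : ℝ) ≤ y}.Finite :=
  (Set.finite_Iic ⌊y⌋₊).subset fun _ hm => Nat.le_floor hm.2

lemma abs_log_lt_of_abs_sub_one_lt {t ε : ℝ} (ht : |t - 1| < 1 - Real.exp (-ε)) :
    |Real.log t| < ε := by
  have hlo := Real.add_one_le_exp (-ε)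
  have hhi := Real.add_one_le_exp ε
  rw [abs_lt] at ht ⊢
  have ht₀ : 0 < t := by linarith [Real.exp_pos (-ε)]
  exact ⟨(Real.lt_log_iff_exp_lt ht₀).2 (by linarith),
    (Real.log_lt_iff_lt_exp ht₀).2 (by linarith)⟩

def HasDensityZero (S : Set ℕ) : Prop :=
  ∀ η : ℝ, 0 < η → ∀ᶠ x : ℝ in atTop, (({m | m ∈ S ∧ (m : ℝ) ≤ x} : Set ℕ).ncard : ℝ) < η * x

namespace HasDensityZero

variable {S T : Set ℕ}

lemma mono (hT : HasDensityZero T) (hST : S ⊆ T) : HasDensityZero S := fun η hη =>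
  (hT η hη).mono fun x hx => by
    have hsub : {m | m ∈ S ∧ (m : ℝ) ≤ x} ⊆ {m | m ∈ T ∧ (m : ℝ) ≤ x} :=
      fun m hm => ⟨hST hm.1, hm.2⟩
    refine lt_of_le_of_lt ?_ hx
    exact_mod_cast Set.ncard_le_ncard hsub (finite_setOf_and_natCast_le _ x)

lemma union (hS : HasDensityZero S) (hT : HasDensityZero T) : HasDensityZero (S ∪ T) := by
  intro η hη
  filter_upwards [hS (η / 2) (by positivity), hT (η / 2) (by positivity)] with x hSx hTx
  have hsplit : {m | m ∈ S ∪ T ∧ (m : ℝ) ≤ x} =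
      {m | m ∈ S ∧ (m : ℝ) ≤ x} ∪ {m | m ∈ T ∧ (m : ℝ) ≤ x} := by
    ext m
    exact or_and_right
  have := Set.ncard_union_le {m | m ∈ S ∧ (m : ℝ) ≤ x} {m | m ∈ T ∧ (m : ℝ) ≤ x}
  rw [hsplit]
  calc _ ≤ (({m | m ∈ S ∧ (m : ℝ) ≤ x} : Set ℕ).ncard : ℝ)
        + (({m | m ∈ T ∧ (m : ℝ) ≤ x} : Set ℕ).ncard : ℝ) := by exact_mod_cast this
    _ < η / 2 * x + η / 2 * x := add_lt_add hSx hTx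
    _ = η * x := by ring

lemma eventually_ncard_lt (hS : HasDensityZero S) {C η : ℝ} (hC : 0 < C) (hη : 0 < η) :
    ∀ᶠ x : ℝ in atTop, (({m | m ∈ S ∧ (m : ℝ) ≤ C * x} : Set ℕ).ncard : ℝ) < η * x := by
  filter_upwards [(tendsto_id.const_mul_atTop hC).eventually (hS (η / C) (div_pos hη hC))]
    with x hx
  calc _ < η / C * (C * x) := hx
    _ = η * x := by field_simp

lemma preimage_mul (hS : HasDensityZero S) {n : ℕ} (hn : 0 < n) :
    HasDensityZero {m | n * m ∈ S} := by
  intro η hη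
  filter_upwards [hS.eventually_ncard_lt (C := n) (by positivity) hη] with x hx
  refine lt_of_le_of_lt ?_ hx
  have hmaps : ∀ m ∈ {m | n * m ∈ S ∧ (m : ℝ) ≤ x},
      n * m ∈ {k | k ∈ S ∧ (k : ℝ) ≤ n * x} := fun m hm =>
    ⟨hm.1, by push_cast; exact mul_le_mul_of_nonneg_left hm.2 (Nat.cast_nonneg n)⟩
  exact_mod_cast Set.ncard_le_ncard_of_injOn _ hmaps (mul_right_injective₀ hn.ne').injOn
    (finite_setOf_and_natCast_le _ _)

end HasDensityZero

lemma ncard_setOf_mem_and_le_le (S : Set ℕ) (N : ℕ) :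
    ({n | n ∈ S ∧ n ≤ N} : Set ℕ).ncard ≤ N + 1 := by
  calc _ ≤ (Set.Iic N).ncard := Set.ncard_le_ncard (fun n hn => hn.2) (Set.finite_Iic N)
    _ = N + 1 := by rw [← Finset.coe_Iic, Set.ncard_coe_finset, Nat.card_Iic]

lemma hasDensityZero_of_upperDensity_eq_zero {S : Set ℕ} (hS : upperDensity S = 0) :
    HasDensityZero S := by
  intro η hη
  have hbdd : IsBoundedUnder (· ≤ ·) atTop
      (fun N : ℕ => (({n | n ∈ S ∧ n ≤ N} : Set ℕ).ncard : ℝ) / N) := by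
    refine isBoundedUnder_of ⟨2, fun N => ?_⟩
    rcases Nat.eq_zero_or_pos N with rfl | hN
    · simp
    · have hN' : (1 : ℝ) ≤ N := by exact_mod_cast hN
      have := ncard_setOf_mem_and_le_le S N
      rw [div_le_iff₀ (by positivity)]
      calc _ ≤ (N : ℝ) + 1 := by exact_mod_cast this
        _ ≤ 2 * N := by linarith
  have hlt : ∀ᶠ N : ℕ in atTop, (({n | n ∈ S ∧ n ≤ N} : Set ℕ).ncard : ℝ) / N < η / 2 :=
    eventually_lt_of_limsup_lt (by rw [← upperDensity, hS]; positivity) hbdd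
  filter_upwards [tendsto_nat_floor_atTop.eventually (hlt.and (eventually_ge_atTop 1)),
    eventually_ge_atTop 0] with x ⟨hx, hx1⟩ hx0
  have hfloor : {m | m ∈ S ∧ (m : ℝ) ≤ x} = {n | n ∈ S ∧ n ≤ ⌊x⌋₊} := by
    ext m
    exact and_congr_right fun _ => (Nat.le_floor_iff hx0).symm
  have hN : (0 : ℝ) < ⌊x⌋₊ := by exact_mod_cast hx1
  rw [hfloor]
  rw [div_lt_iff₀ hN] at hx
  calc _ < η / 2 * ⌊x⌋₊ := hx
    _ ≤ η / 2 * x := by gcongr; exact Nat.floor_le hx0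
    _ < η * x := by nlinarith [Nat.floor_le hx0]

def WeaklySuperAdditive (L : ℕ → ℝ) : Prop :=
  ∀ n : ℕ, 0 < n → ∀ ε : ℝ, 0 < ε → ∃ δ : ℝ, 0 < δ ∧ ∀ᶠ x : ℝ in atTop,
    δ * x ≤ (({m : ℕ | (x ≤ m ∧ (m : ℝ) ≤ (1 + ε) * x) ∧ L n + L m ≤ L (n * m) + ε} :
      Set ℕ).ncard : ℝ)

def AddLogUniformlyContinuous (G : ℝ → ℝ) : Prop :=
  ∀ ε : ℝ, 0 < ε → ∃ δ : ℝ, 0 < δ ∧ ∀ x y : ℝ, 0 < x → 0 < y →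
    |x / y - 1| < δ → |G x - G y| < ε

lemma AddLogUniformlyContinuous.neg {G : ℝ → ℝ} (hG : AddLogUniformlyContinuous G) :
    AddLogUniformlyContinuous (fun x => -G x) := by
  simpa only [AddLogUniformlyContinuous, neg_sub_neg, abs_sub_comm] using hG

lemma one_sub_exp_neg_pos {ε : ℝ} (hε : 0 < ε) : 0 < 1 - Real.exp (-ε) :=
  sub_pos.2 (Real.exp_lt_one_iff.2 (neg_neg_of_pos hε))

lemma WeaklySuperMult.weaklySuperAdditive_log {f : ℕ → ℝ} (hf : ∀ n, 0 < f n)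
    (h : WeaklySuperMult f) : WeaklySuperAdditive (fun n => Real.log (f n)) := by
  intro n hn ε hε
  obtain ⟨ε', hε', hε'ε, hε'exp⟩ : ∃ ε', 0 < ε' ∧ ε' ≤ ε ∧ Real.exp (-ε) ≤ 1 - ε' :=
    ⟨min ε (1 - Real.exp (-ε)), lt_min hε (one_sub_exp_neg_pos hε), min_le_left _ _,
      by linarith [min_le_right ε (1 - Real.exp (-ε))]⟩
  have hε'1 : 0 < 1 - ε' := (Real.exp_pos _).trans_le hε'exp
  have hlog : -ε ≤ Real.log (1 - ε') := (Real.le_log_iff_exp_le hε'1).2 hε'exp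
  obtain ⟨x₀, -, δ, hδ, hcount⟩ := h n hn ε' hε'
  refine ⟨δ, hδ, ?_⟩
  filter_upwards [eventually_gt_atTop x₀, eventually_ge_atTop 0] with x hx hx0
  refine (hcount x hx).trans ?_
  have hsub : {m : ℕ | (x ≤ m ∧ (m : ℝ) ≤ (1 + ε') * x) ∧ (1 - ε') * f n * f m ≤ f (n * m)} ⊆
      {m : ℕ | (x ≤ m ∧ (m : ℝ) ≤ (1 + ε) * x) ∧
        Real.log (f n) + Real.log (f m) ≤ Real.log (f (n * m)) + ε} := by
    rintro m ⟨⟨hxm, hmx⟩, hm⟩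
    refine ⟨⟨hxm, hmx.trans (by gcongr)⟩, ?_⟩
    have := Real.log_le_log (mul_pos (mul_pos hε'1 (hf n)) (hf m)) hm
    rw [Real.log_mul (mul_pos hε'1 (hf n)).ne' (hf m).ne',
      Real.log_mul hε'1.ne' (hf n).ne'] at this
    linarith
  exact_mod_cast Set.ncard_le_ncard hsub
    ((finite_setOf_and_natCast_le (fun m : ℕ => x ≤ m) ((1 + ε) * x)).subset
      fun _ hm => hm.1)

lemma HasNormalOrder.hasDensityZero_log {f : ℕ → ℝ} {g : ℝ → ℝ} (hf : ∀ n, 0 < f n)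
    (hg : ∀ x : ℝ, 0 < x → 0 < g x) (h : HasNormalOrder f g) {ε : ℝ} (hε : 0 < ε) :
    HasDensityZero {m | 0 < m ∧ ε ≤ |Real.log (f m) - Real.log (g m)|} := by
  refine (hasDensityZero_of_upperDensity_eq_zero (h _ (one_sub_exp_neg_pos hε))).mono ?_
  rintro m ⟨hm, hlog⟩
  by_contra hlt
  have hgm := hg m (Nat.cast_pos.2 hm)
  have hratio : |f m / g m - 1| < 1 - Real.exp (-ε) := by
    rw [div_sub_one hgm.ne', abs_div, abs_of_pos hgm, div_lt_iff₀ hgm]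
    exact not_le.1 hlt
  have := abs_log_lt_of_abs_sub_one_lt hratio
  rw [Real.log_div (hf m).ne' hgm.ne'] at this
  linarith

lemma LogUniformlyContinuous.addLogUniformlyContinuous_log {g : ℝ → ℝ}
    (hg : ∀ x : ℝ, 0 < x → 0 < g x) (h : LogUniformlyContinuous g) :
    AddLogUniformlyContinuous (fun x => Real.log (g x)) := by
  intro ε hε
  obtain ⟨δ, hδ, hδg⟩ := h _ (one_sub_exp_neg_pos hε)
  refine ⟨δ, hδ, fun x y hx hy hxy => ?_⟩
  rw [← Real.log_div (hg x hx).ne' (hg y hy).ne']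
  exact abs_log_lt_of_abs_sub_one_lt (hδg x y hx hy hxy)

section LogScale

variable {L : ℕ → ℝ} {G : ℝ → ℝ}

lemma WeaklySuperAdditive.eventually_add_le (hL : WeaklySuperAdditive L)
    (hLG : ∀ ε : ℝ, 0 < ε → HasDensityZero {m | 0 < m ∧ ε ≤ |L m - G m|})
    (hG : AddLogUniformlyContinuous G) {n : ℕ} (hn : 0 < n) {ε : ℝ} (hε : 0 < ε) :
    ∀ᶠ x : ℝ in atTop, L n + G x ≤ G (n * x) + ε := by
  obtain ⟨δ, hδ, hGδ⟩ := hG (ε / 5) (by positivity)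
  set ε₂ := min (ε / 5) (δ / 2)
  have hε₂ : 0 < ε₂ := lt_min (by positivity) (by positivity)
  obtain ⟨η, hη, hcount⟩ := hL n hn ε₂ hε₂
  have hS := hLG (ε / 5) (by positivity)
  have hbad := (hS.union (hS.preimage_mul hn)).eventually_ncard_lt
    (C := 1 + ε₂) (by positivity) hη
  -- at least `η x` window elements satisfy the inequality, fewer have `m` or `n * m` exceptional
  filter_upwards [hcount, hbad, eventually_gt_atTop 0] with x hgood hbad hx
  obtain ⟨m, ⟨⟨hxm, hmx⟩, hm⟩, hmS⟩ := Set.exists_mem_notMem_of_ncard_lt_ncard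
    (by exact_mod_cast hbad.trans_le hgood) (finite_setOf_and_natCast_le _ _)
  have hm0 : 0 < m := Nat.cast_pos.1 (hx.trans_le hxm)
  have hLm : |L m - G m| < ε / 5 :=
    not_le.1 fun h => hmS ⟨Or.inl ⟨hm0, h⟩, hmx⟩
  have hLnm : |L (n * m) - G (n * m)| < ε / 5 := by
    have := not_le.1 fun h => hmS ⟨Or.inr ⟨Nat.mul_pos hn hm0, h⟩, hmx⟩
    exact_mod_cast this
  have hratio : |(m : ℝ) / x - 1| < δ := by
    rw [abs_lt, lt_sub_iff_add_lt, sub_lt_iff_lt_add, lt_div_iff₀ hx, div_lt_iff₀ hx]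
    constructor <;> nlinarith [min_le_right (ε / 5) (δ / 2)]
  have hGm := hGδ m x (by positivity) hx hratio
  have hGnm := hGδ (n * m) (n * x) (by positivity) (by positivity)
    (by rwa [mul_div_mul_left _ _ (by positivity : (n : ℝ) ≠ 0)])
  rw [abs_lt] at hLm hLnm hGm hGnm
  linarith [min_le_left (ε / 5) (δ / 2)]

lemma tendsto_sub_of_weaklySuperAdditive (hL : WeaklySuperAdditive L)
    (hL' : WeaklySuperAdditive (fun n => -L n))
    (hLG : ∀ ε : ℝ, 0 < ε → HasDensityZero {m | 0 < m ∧ ε ≤ |L m - G m|})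
    (hG : AddLogUniformlyContinuous G) {n : ℕ} (hn : 0 < n) :
    Tendsto (fun x => G (n * x) - G x) atTop (𝓝 (L n)) := by
  have hLG' : ∀ ε : ℝ, 0 < ε → HasDensityZero {m | 0 < m ∧ ε ≤ |-L m - -G m|} :=
    fun ε hε => (hLG ε hε).mono fun m ⟨hm, h⟩ => ⟨hm, by rwa [neg_sub_neg, abs_sub_comm] at h⟩
  refine tendsto_order.2 ⟨fun a ha => ?_, fun a ha => ?_⟩
  · filter_upwards [hL.eventually_add_le hLG hG hn (ε := (L n - a) / 2) (by linarith)]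
      with x hx
    linarith
  · filter_upwards [hL'.eventually_add_le (G := fun x => -G x) hLG' hG.neg hn
      (ε := (a - L n) / 2) (by linarith)] with x hx
    linarith

end LogScale

section Limit

variable {L : ℕ → ℝ} {G : ℝ → ℝ}
  (hlim : ∀ n : ℕ, 0 < n → Tendsto (fun x => G (n * x) - G x) atTop (𝓝 (L n)))
include hlim

lemma map_mul_of_tendsto {n k : ℕ} (hn : 0 < n) (hk : 0 < k) : L (n * k) = L n + L k := by
  refine tendsto_nhds_unique (hlim (n * k) (Nat.mul_pos hn hk)) ?_
  have hcomp := (hlim n hn).comp (tendsto_id.const_mul_atTop (Nat.cast_pos.2 hk))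
  convert hcomp.add (hlim k hk) using 1
  ext x
  simp only [Function.comp_apply, id, Nat.cast_mul, mul_assoc]
  ring

lemma exists_abs_sub_le_of_tendsto (hG : AddLogUniformlyContinuous G) {ε : ℝ} (hε : 0 < ε) :
    ∃ δ : ℝ, 0 < δ ∧ ∀ n k : ℕ, 0 < n → 0 < k → |(n : ℝ) / k - 1| < δ → |L n - L k| ≤ ε := by
  obtain ⟨δ, hδ, hGδ⟩ := hG ε hε
  refine ⟨δ, hδ, fun n k hn hk hnk => le_of_tendsto ((hlim n hn).sub (hlim k hk)).abs ?_⟩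
  filter_upwards [eventually_gt_atTop 0] with x hx
  have := hGδ (n * x) (k * x) (by positivity) (by positivity)
    (by rwa [mul_div_mul_right _ _ hx.ne'])
  rw [sub_sub_sub_cancel_right]
  exact this.le

end Limit

section Additive

variable {L : ℕ → ℝ} (hadd : ∀ a b : ℕ, 0 < a → 0 < b → L (a * b) = L a + L b)
include hadd

lemma map_pow_of_add {n : ℕ} (hn : 0 < n) (k : ℕ) : L (n ^ k) = k * L n := by
  induction k with
  | zero => simpa using hadd 1 1 one_pos one_pos
  | succ k ih =>
    rw [pow_succ, hadd _ _ (pow_pos hn k) hn, ih]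
    push_cast
    ring

lemma exists_abs_sub_le_of_le_mul {δ D : ℝ} (hδ : 0 < δ)
    (hloc : ∀ a b : ℕ, 0 < a → 0 < b → |(a : ℝ) / b - 1| < δ → |L a - L b| ≤ D) (R : ℕ) :
    ∃ C : ℝ, ∀ a b : ℕ, 0 < b → b ≤ a → a ≤ R * b → |L a - L b| ≤ C := by
  obtain ⟨B, hB0, hB⟩ : ∃ B : ℕ, 0 < B ∧ 1 < δ * B := by
    obtain ⟨N, hN⟩ := exists_nat_one_div_lt hδ
    refine ⟨N + 1, N.succ_pos, ?_⟩
    rw [div_lt_iff₀ (by positivity)] at hN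
    exact_mod_cast hN
  set M := ∑ i ∈ Finset.range (B * (R + 1) + 1), |L i|
  have hM : ∀ i ≤ B * (R + 1), |L i| ≤ M := fun i hi =>
    Finset.single_le_sum (f := fun i => |L i|) (fun _ _ => abs_nonneg _)
      (Finset.mem_range.2 (Nat.lt_succ_of_le hi))
  refine ⟨D + 2 * M, fun a b hb hba hab => ?_⟩
  have ha : 0 < a := hb.trans_le hba
  have hBa : 0 < B * a := Nat.mul_pos hB0 ha
  -- `L a - L b = L (B * a) - L (c * b) + L c - L B`, where `c * b / (B * a) ∈ (1, 1 + 1 / B]`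
  set c := B * a / b + 1
  have hc0 : 0 < c := Nat.succ_pos _
  have hc_gt : B * a < c * b := by simpa [c, add_mul] using Nat.lt_div_mul_add (a := B * a) hb
  have hc_le : c * b ≤ B * a + b := by simpa [c, add_mul] using Nat.div_mul_le_self (B * a) b
  have hcR : c ≤ B * (R + 1) := by
    have : B * a / b ≤ B * R := Nat.div_le_of_le_mul (by nlinarith)
    show B * a / b + 1 ≤ B * (R + 1)
    nlinarith
  have hratio : |((c * b : ℕ) : ℝ) / (B * a : ℕ) - 1| < δ := by
    have hBa' : (0 : ℝ) < (B * a : ℕ) := by exact_mod_cast hBa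
    have h1 : ((B * a : ℕ) : ℝ) < (c * b : ℕ) := by exact_mod_cast hc_gt
    have h2 : ((c * b : ℕ) : ℝ) ≤ (B * a : ℕ) + b := by exact_mod_cast hc_le
    have h3 : (b : ℝ) ≤ a := by exact_mod_cast hba
    have ha' : (0 : ℝ) < a := by exact_mod_cast ha
    rw [abs_of_pos (by rw [sub_pos, one_lt_div hBa']; exact h1), sub_lt_iff_lt_add',
      div_lt_iff₀ hBa']
    push_cast at h2 ⊢
    nlinarith
  have hD := hloc (c * b) (B * a) (Nat.mul_pos hc0 hb) hBa hratio
  rw [hadd _ _ hc0 hb, hadd _ _ hB0 ha] at hD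
  have hc := hM c hcR
  have hB' := hM B (Nat.le_mul_of_pos_right B (Nat.succ_pos R))
  rw [abs_le] at hD hc hB' ⊢
  constructor <;> linarith

lemma mul_log_eq_mul_log
    (hbdd : ∀ R : ℕ, ∃ C : ℝ, ∀ a b : ℕ, 0 < b → b ≤ a → a ≤ R * b → |L a - L b| ≤ C)
    {n m : ℕ} (hn : 0 < n) (hm : 2 ≤ m) :
    L n * Real.log m = L m * Real.log n := by
  obtain ⟨C, hC⟩ := hbdd m
  set A := (C + |L m|) * Real.log m
  have hlogm : 0 < Real.log m := Real.log_pos (by exact_mod_cast hm)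
  -- with `l = log_m (n ^ k)`, both `k L(n) - l L(m)` and `k log n - l log m` stay bounded
  have hbound : ∀ k : ℕ, 0 < k → |L n * Real.log m - L m * Real.log n| ≤ A / k := by
    intro k hk
    set l := Nat.log m (n ^ k)
    have h1 : m ^ l ≤ n ^ k := Nat.pow_log_le_self m (pow_ne_zero _ hn.ne')
    have h2 : n ^ k < m ^ (l + 1) := Nat.lt_pow_succ_log_self hm _
    have hL : |k * L n - l * L m| ≤ C := by
      rw [← map_pow_of_add hadd hn, ← map_pow_of_add hadd (by omega)]
      exact hC _ _ (by positivity) h1 (by rw [pow_succ, mul_comm] at h2; exact h2.le)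
    have hlog1 : l * Real.log m ≤ k * Real.log n := by
      rw [← Real.log_pow, ← Real.log_pow]
      exact Real.log_le_log (by positivity) (by exact_mod_cast h1)
    have hlog2 : k * Real.log n < (l + 1) * Real.log m := by
      rw [← Real.log_pow, ← Nat.cast_succ, ← Real.log_pow]
      exact Real.log_lt_log (by positivity) (by exact_mod_cast h2)
    have hlog : |k * Real.log n - l * Real.log m| ≤ Real.log m := by
      rw [abs_le]
      constructor <;> linarith
    rw [le_div_iff₀ (by positivity)]
    calc |L n * Real.log m - L m * Real.log n| * k
        = |(L n * Real.log m - L m * Real.log n) * k| := by rw [abs_mul, Nat.abs_cast]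
      _ = |(k * L n - l * L m) * Real.log m - L m * (k * Real.log n - l * Real.log m)| := by
          ring_nf
      _ ≤ |k * L n - l * L m| * Real.log m + |L m| * |k * Real.log n - l * Real.log m| := by
          refine (abs_sub _ _).trans_eq ?_
          rw [abs_mul, abs_mul, abs_of_pos hlogm]
      _ ≤ C * Real.log m + |L m| * Real.log m := by gcongr
      _ = A := by ring
  have := ge_of_tendsto (tendsto_const_div_atTop_nhds_zero_nat A)
    (by filter_upwards [eventually_gt_atTop 0] with k hk using hbound k hk)
  exact sub_eq_zero.1 (abs_nonpos_iff.1 this)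

lemma exists_eq_mul_log_of_add {δ D : ℝ} (hδ : 0 < δ)
    (hloc : ∀ a b : ℕ, 0 < a → 0 < b → |(a : ℝ) / b - 1| < δ → |L a - L b| ≤ D) :
    ∃ c : ℝ, ∀ n : ℕ, 0 < n → L n = c * Real.log n := by
  refine ⟨L 2 / Real.log 2, fun n hn => ?_⟩
  have := mul_log_eq_mul_log hadd (exists_abs_sub_le_of_le_mul hadd hδ hloc) hn le_rfl
  push_cast at this
  field_simp
  linarith

end Additive

/-- Corollary (log-uniformly continuous case): if `f : ℕ → (0,∞)` is such that both `f` and `1/f` are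
weakly super-multiplicative, and `f` has a strictly positive, log-uniformly continuous normal order, then `f(n) = n ^ c` for some
constant `c` and all `n`. -/
theorem weakly_supermult_both_logUC_normal_order
    (f : ℕ → ℝ) (g : ℝ → ℝ)
    (hfpos : ∀ n, 0 < f n)
    (hwsm : WeaklySuperMult f)
    (hwsm' : WeaklySuperMult (fun n => 1 / f n))
    (hgpos : ∀ x : ℝ, 0 < x → 0 < g x)
    (hgluc : LogUniformlyContinuous g)
    (hno : HasNormalOrder f g) :
    ∃ c : ℝ, ∀ n : ℕ, 0 < n → f n = (n : ℝ) ^ c := by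
  have hL := hwsm.weaklySuperAdditive_log hfpos
  have hL' : WeaklySuperAdditive (fun n => -Real.log (f n)) := by
    simpa only [one_div, Real.log_inv] using
      hwsm'.weaklySuperAdditive_log fun n => one_div_pos.2 (hfpos n)
  have hG := hgluc.addLogUniformlyContinuous_log hgpos
  have hlim : ∀ n : ℕ, 0 < n → Tendsto (fun x => Real.log (g (n * x)) - Real.log (g x)) atTop
      (𝓝 (Real.log (f n))) := fun n hn =>
    tendsto_sub_of_weaklySuperAdditive (G := fun x => Real.log (g x)) hL hL'
      (fun _ hε => hno.hasDensityZero_log hfpos hgpos hε) hG hn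
  obtain ⟨δ, hδ, hloc⟩ := exists_abs_sub_le_of_tendsto hlim hG one_pos
  obtain ⟨c, hc⟩ := exists_eq_mul_log_of_add
    (fun _ _ => map_mul_of_tendsto (G := fun x => Real.log (g x)) hlim) hδ hloc
  refine ⟨c, fun n hn => ?_⟩
  rw [← Real.exp_log (hfpos n), hc n hn, Real.rpow_def_of_pos (Nat.cast_pos.2 hn), mul_comm]
end

section
/- Let f : ℕ → [0,∞) be weakly super-multiplicative with normal order g, where g : (0,∞) → (0,∞) is strictly positive and log-uniformly continuous. Then for every n ∈ ℕ and every ε > 0 there exist a real number γ with 0 < γ ≤ ε and some x₀ > 0 such that for all x > x₀ one has g(n(1+γ)x) ≥ (1 − 5ε)·f(n)·g(x). -/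
/-
Weak super-multiplicativity provides `≫ x` integers `m ∈ [x, (1+γ)x]` with
`f(nm) ≥ (1-γ) f(n) f(m)`, whereas only `o(x)` integers `m` have `m` or `nm` in the exceptional
set `{k : |f k - g k| ≥ ε g k}` of the normal order. For any other such `m`, log-uniform continuity
(with `γ` small) gives `f(m) > (1-ε) g(m) > (1-ε)² g(x)` and
`f(nm) < (1+ε) g(nm) < (1+ε)² g(n(1+γ)x)`, hence `(1-ε)³ f(n) g(x) ≤ (1+ε)² g(n(1+γ)x)`;
finally `(1-5ε)(1+ε)² ≤ (1-ε)³`.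
-/

open Filter

lemma ncard_mem_le_le_succ (S : Set ℕ) (N : ℕ) : ({k | k ∈ S ∧ k ≤ N} : Set ℕ).ncard ≤ N + 1 :=
  calc ({k | k ∈ S ∧ k ≤ N} : Set ℕ).ncard ≤ (Set.Iic N).ncard :=
        Set.ncard_le_ncard (fun _ hk => hk.2) (Set.finite_Iic N)
    _ = N + 1 := by rw [← Finset.coe_Iic, Set.ncard_coe_finset, Nat.card_Iic]

lemma eventually_ncard_le_of_upperDensity_eq_zero {S : Set ℕ} (hS : upperDensity S = 0)
    {c : ℝ} (hc : 0 < c) :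
    ∀ᶠ N : ℕ in atTop, (({k | k ∈ S ∧ k ≤ N} : Set ℕ).ncard : ℝ) ≤ c * N := by
  have hbdd : IsBoundedUnder (· ≤ ·) atTop
      (fun N : ℕ => (({k | k ∈ S ∧ k ≤ N} : Set ℕ).ncard : ℝ) / N) := by
    refine isBoundedUnder_of ⟨2, fun N => ?_⟩
    rcases N.eq_zero_or_pos with rfl | hN
    · simp
    · have hcard : (({k | k ∈ S ∧ k ≤ N} : Set ℕ).ncard : ℝ) ≤ N + 1 := by
        exact_mod_cast ncard_mem_le_le_succ S N
      have hN' : (1 : ℝ) ≤ N := by exact_mod_cast hN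
      rw [div_le_iff₀ (by positivity)]
      linarith
  filter_upwards [eventually_lt_of_limsup_lt (hS.trans_lt hc) hbdd, eventually_gt_atTop 0]
    with N hN hN0
  exact ((div_lt_iff₀ (by exact_mod_cast hN0)).mp hN).le

lemma ncard_preimage_mul_le (S : Set ℕ) {n : ℕ} (hn : 0 < n) (N : ℕ) :
    ({m | n * m ∈ S ∧ m ≤ N} : Set ℕ).ncard ≤ ({k | k ∈ S ∧ k ≤ n * N} : Set ℕ).ncard :=
  Set.ncard_le_ncard_of_injOn (n * ·) (fun _ hm => ⟨hm.1, Nat.mul_le_mul_left n hm.2⟩)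
    (fun _ _ _ _ h => Nat.eq_of_mul_eq_mul_left hn h)
    ((Set.finite_Iic _).subset fun _ hk => hk.2)

lemma eventually_ncard_mem_or_mul_mem_le {S : Set ℕ} (hS : upperDensity S = 0) {n : ℕ}
    (hn : 0 < n) {c : ℝ} (hc : 0 < c) :
    ∀ᶠ N : ℕ in atTop,
      (({m | (m ∈ S ∨ n * m ∈ S) ∧ m ≤ N} : Set ℕ).ncard : ℝ) ≤ c * N := by
  have hnR : (0 : ℝ) < n := by exact_mod_cast hn
  have hmul : Tendsto (n * ·) atTop atTop :=
    tendsto_atTop_mono (fun N => Nat.le_mul_of_pos_left N hn) tendsto_id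
  filter_upwards [eventually_ncard_le_of_upperDensity_eq_zero hS (half_pos hc),
    hmul.eventually (eventually_ncard_le_of_upperDensity_eq_zero hS
      (div_pos (half_pos hc) hnR))] with N hsmall hlarge
  have hsub : ({m | (m ∈ S ∨ n * m ∈ S) ∧ m ≤ N} : Set ℕ) ⊆
      {k | k ∈ S ∧ k ≤ N} ∪ {m | n * m ∈ S ∧ m ≤ N} :=
    fun _ ⟨hm, hmN⟩ => hm.imp (And.intro · hmN) (And.intro · hmN)
  have hsplit := (Set.ncard_le_ncard hsub
    ((Set.finite_Iic N).subset fun _ h => h.elim And.right And.right)).trans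
    (Set.ncard_union_le _ _)
  calc (({m | (m ∈ S ∨ n * m ∈ S) ∧ m ≤ N} : Set ℕ).ncard : ℝ)
      ≤ ({k | k ∈ S ∧ k ≤ N} : Set ℕ).ncard + ({k | k ∈ S ∧ k ≤ n * N} : Set ℕ).ncard := by
        exact_mod_cast hsplit.trans (Nat.add_le_add_left (ncard_preimage_mul_le S hn N) _)
    _ ≤ c / 2 * N + c / 2 / n * ↑(n * N) := add_le_add hsmall hlarge
    _ = c * N := by push_cast; field_simp; ring

lemma abs_sub_lt_mul_iff {a b ε : ℝ} :
    |a - b| < ε * b ↔ (1 - ε) * b < a ∧ a < (1 + ε) * b := by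
  rw [abs_sub_lt_iff]
  constructor <;> rintro ⟨h₁, h₂⟩ <;> constructor <;> linarith

lemma abs_div_sub_one_lt_iff {a b ε : ℝ} (hb : 0 < b) :
    |a / b - 1| < ε ↔ (1 - ε) * b < a ∧ a < (1 + ε) * b := by
  rw [div_sub_one hb.ne', abs_div, abs_of_pos hb, div_lt_iff₀ hb, abs_sub_lt_mul_iff]

lemma LogUniformlyContinuous.exists_mul_bounds {g : ℝ → ℝ} (hg : LogUniformlyContinuous g)
    (hgpos : ∀ x, 0 < x → 0 < g x) {ε : ℝ} (hε : 0 < ε) :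
    ∃ δ > 0, ∀ x y : ℝ, 0 < x → 0 < y → (1 - δ) * y < x → x < (1 + δ) * y →
      (1 - ε) * g y < g x ∧ g x < (1 + ε) * g y := by
  obtain ⟨δ, hδ, h⟩ := hg ε hε
  refine ⟨δ, hδ, fun x y hx hy hlo hhi => ?_⟩
  rw [← abs_div_sub_one_lt_iff (hgpos y hy)]
  exact h x y hx hy ((abs_div_sub_one_lt_iff hy).mpr ⟨hlo, hhi⟩)

lemma LogUniformlyContinuous.exists_forall_mem_Icc {g : ℝ → ℝ} (hg : LogUniformlyContinuous g)
    (hgpos : ∀ x, 0 < x → 0 < g x) {ε : ℝ} (hε : 0 < ε) :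
    ∃ γ > 0, γ ≤ ε ∧ ∀ x y : ℝ, 0 < x → x ≤ y → y ≤ (1 + γ) * x →
      (1 - ε) * g x < g y ∧ g y < (1 + ε) * g ((1 + γ) * x) := by
  obtain ⟨δ, hδ, hgδ⟩ := hg.exists_mul_bounds hgpos hε
  obtain ⟨γ, hγ, hγε, hγδ⟩ : ∃ γ > 0, γ ≤ ε ∧ γ < δ :=
    ⟨min ε (δ / 2), lt_min hε (half_pos hδ), min_le_left _ _,
      (min_le_right _ _).trans_lt (half_lt_self hδ)⟩
  refine ⟨γ, hγ, hγε, fun x y hx hxy hyx => ?_⟩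
  have hy : 0 < y := hx.trans_le hxy
  have hδx : 0 < (δ - γ) * x := mul_pos (by linarith) hx
  have hδγx : 0 < δ * γ * x := by positivity
  exact ⟨(hgδ y x hy hx (by nlinarith) (by nlinarith)).1,
    (hgδ y ((1 + γ) * x) hy (by positivity) (by nlinarith) (by nlinarith)).2⟩

lemma WeaklySuperMult.eventually_exists_avoiding {f : ℕ → ℝ} (hf : WeaklySuperMult f)
    {S : Set ℕ} (hS : upperDensity S = 0) {n : ℕ} (hn : 0 < n) {γ : ℝ} (hγ : 0 < γ) :
    ∀ᶠ x : ℝ in atTop, ∃ m : ℕ, (x ≤ m ∧ (m : ℝ) ≤ (1 + γ) * x) ∧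
      (1 - γ) * f n * f m ≤ f (n * m) ∧ m ∉ S ∧ n * m ∉ S := by
  obtain ⟨x₁, -, δ, hδ, hcount⟩ := hf n hn γ hγ
  have hfloor : Tendsto (fun x : ℝ => ⌊(1 + γ) * x⌋₊) atTop atTop :=
    tendsto_nat_floor_atTop.comp (tendsto_id.const_mul_atTop (by linarith))
  filter_upwards [hfloor.eventually (eventually_ncard_mem_or_mul_mem_le hS hn
      (c := δ / (2 * (1 + γ))) (by positivity)), eventually_gt_atTop x₁,
      eventually_gt_atTop 0] with x hsparse hx₁ hx
  set N := ⌊(1 + γ) * x⌋₊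
  have hNx : (N : ℝ) ≤ (1 + γ) * x := Nat.floor_le (by positivity)
  have hlt : ({m | (m ∈ S ∨ n * m ∈ S) ∧ m ≤ N} : Set ℕ).ncard <
      ({m : ℕ | (x ≤ (m : ℝ) ∧ (m : ℝ) ≤ (1 + γ) * x) ∧
        (1 - γ) * f n * f m ≤ f (n * m)} : Set ℕ).ncard := by
    have hhalf : δ / (2 * (1 + γ)) * ((1 + γ) * x) = δ * x / 2 := by field_simp
    have hbad : (({m | (m ∈ S ∨ n * m ∈ S) ∧ m ≤ N} : Set ℕ).ncard : ℝ) < δ * x :=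
      calc _ ≤ δ / (2 * (1 + γ)) * N := hsparse
        _ ≤ δ / (2 * (1 + γ)) * ((1 + γ) * x) := by gcongr
        _ < δ * x := by rw [hhalf]; linarith [mul_pos hδ hx]
    exact_mod_cast hbad.trans_le (hcount x hx₁)
  obtain ⟨m, ⟨hmx, hsm⟩, hbad⟩ := Set.exists_mem_notMem_of_ncard_lt_ncard hlt
    ((Set.finite_Iic N).subset fun _ h => h.2)
  have hmN : m ≤ N := Nat.le_floor hmx.2
  exact ⟨m, hmx, hsm, fun h => hbad ⟨Or.inl h, hmN⟩, fun h => hbad ⟨Or.inr h, hmN⟩⟩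

lemma one_sub_five_mul_mul_sq_le {ε : ℝ} (hε : 0 ≤ ε) :
    (1 - 5 * ε) * (1 + ε) ^ 2 ≤ (1 - ε) ^ 3 := by
  nlinarith [sq_nonneg ε, mul_nonneg (sq_nonneg ε) hε]

lemma le_of_supermul_of_approx {ε γ fn fm fnm gx gm gnm gb : ℝ} (hε : 0 ≤ ε) (hε₅ : 5 * ε < 1)
    (hγ : γ ≤ ε) (hfn : 0 ≤ fn) (hgx : 0 ≤ gx) (hsm : (1 - γ) * fn * fm ≤ fnm)
    (hfm : (1 - ε) * gm < fm) (hgm : (1 - ε) * gx < gm)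
    (hfnm : fnm < (1 + ε) * gnm) (hgnm : gnm < (1 + ε) * gb) :
    (1 - 5 * ε) * fn * gx ≤ gb := by
  have hε₁ : 0 < 1 - ε := by linarith
  have hfm' : (1 - ε) ^ 2 * gx ≤ fm := by nlinarith
  have hγ₁ : 0 ≤ 1 - γ := by linarith
  refine le_of_mul_le_mul_left ?_ (by positivity : 0 < (1 + ε) ^ 2)
  calc (1 + ε) ^ 2 * ((1 - 5 * ε) * fn * gx)
      = ((1 - 5 * ε) * (1 + ε) ^ 2) * (fn * gx) := by ring
    _ ≤ (1 - ε) ^ 3 * (fn * gx) := by gcongr; exact one_sub_five_mul_mul_sq_le hε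
    _ = (1 - ε) * fn * ((1 - ε) ^ 2 * gx) := by ring
    _ ≤ (1 - γ) * fn * fm := by gcongr
    _ ≤ fnm := hsm
    _ ≤ (1 + ε) * ((1 + ε) * gb) := by nlinarith
    _ = (1 + ε) ^ 2 * gb := by ring

/-- Growth condition for log-uniformly continuous `g`: if `f : ℕ → [0,∞)` is weakly
super-multiplicative with strictly positive log-uniformly continuous normal order `g`, then for every `n` and
`ε > 0` there are `γ` with `0 < γ ≤ ε` and `x₀ > 0` such that for all `x > x₀` we have
`g(n(1+γ)x) ≥ (1-5ε) f(n) g(x)`. -/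
theorem growth_condition_logUC
    (f : ℕ → ℝ) (g : ℝ → ℝ)
    (hf0 : ∀ n, 0 ≤ f n)
    (hwsm : WeaklySuperMult f)
    (hgpos : ∀ x : ℝ, 0 < x → 0 < g x)
    (hgluc : LogUniformlyContinuous g)
    (hno : HasNormalOrder f g) :
    ∀ n : ℕ, 0 < n → ∀ ε : ℝ, 0 < ε → ∃ γ : ℝ, 0 < γ ∧ γ ≤ ε ∧
      ∃ x₀ : ℝ, 0 < x₀ ∧ ∀ x : ℝ, x₀ < x →
        (1 - 5 * ε) * f n * g x ≤ g ((n : ℝ) * (1 + γ) * x) := by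
  intro n hn ε hε
  have hnR : (0 : ℝ) < n := by exact_mod_cast hn
  rcases le_or_gt 1 (5 * ε) with hε₅ | hε₅
  · refine ⟨ε, hε, le_rfl, 1, one_pos, fun x hx => ?_⟩
    have hx0 : 0 < x := one_pos.trans hx
    have hgx := hgpos x hx0
    have hgb := hgpos (n * (1 + ε) * x) (by positivity)
    nlinarith [mul_nonneg (hf0 n) hgx.le]
  obtain ⟨γ, hγ, hγε, hgγ⟩ := hgluc.exists_forall_mem_Icc hgpos hε
  obtain ⟨x₀, hx₀, hgood⟩ := (atTop_basis_Ioi' 0).eventually_iff.mp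
    ((hwsm.eventually_exists_avoiding (hno ε hε) hn hγ).and (eventually_gt_atTop 0))
  refine ⟨γ, hγ, hγε, x₀, hx₀, fun x hx => ?_⟩
  obtain ⟨⟨m, ⟨hxm, hmx⟩, hsm, hm, hnm⟩, hx⟩ := hgood hx
  have hgm := (hgγ x m hx hxm hmx).1
  have hgnm := (hgγ (n * x) (n * m : ℕ) (mul_pos hnR hx) (by push_cast; gcongr)
    (by push_cast; rw [mul_left_comm]; gcongr)).2
  rw [show (n : ℝ) * (1 + γ) * x = (1 + γ) * (n * x) by ring]
  exact le_of_supermul_of_approx hε.le hε₅ hγε (hf0 n) (hgpos x hx).le hsm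
    (abs_sub_lt_mul_iff.mp (not_le.mp hm)).1 hgm (abs_sub_lt_mul_iff.mp (not_le.mp hnm)).2 hgnm
end
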